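/- For every α ∈ ℝ^k and every x of the form x = Xν for some positive probability vector ν, the entropy production equals the rate function with tilted reference measure: φ(x|p) + ψ(α|p) − αᵀx = φ(x | p^{Xᵀα}). -/
import Mathlib


open Real

/-- `p` is a positive probability vector on `{1,…,n}`. -/
def IsPPV {n : ℕ} (p : Fin n → ℝ) : Prop := (∀ i, 0 < p i) ∧ (∑ i, p i) = 1

/-- Relative entropy (KL divergence) `S(ν|q) = ∑ i, ν i · log (ν i / q i)`. -/
noncomputable def relEnt {n : ℕ} (ν q : Fin n → ℝ) : ℝ := ∑ i, ν i * Real.log (ν i / q i)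

/-- Free energy `F(μ|p) = log (∑ i, p i · exp (μ i))`. -/
noncomputable def freeEnergy {n : ℕ} (p μ : Fin n → ℝ) : ℝ :=
  Real.log (∑ i, p i * Real.exp (μ i))

/-- Exponentially tilted measure `(p^μ)_i = p i · exp (μ i − F(μ|p))`. -/
noncomputable def tilted {n : ℕ} (p μ : Fin n → ℝ) : Fin n → ℝ :=
  fun i => p i * Real.exp (μ i - freeEnergy p μ)

/-- Contracted rate function `φ(x|q) = inf { S(ν|q) : ν a positive probability
vector with Xν = x }`. -/
noncomputable def phi {n k : ℕ} (X : Matrix (Fin k) (Fin n) ℝ) (q : Fin n → ℝ)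
    (x : Fin k → ℝ) : ℝ :=
  sInf { t : ℝ | ∃ ν : Fin n → ℝ, IsPPV ν ∧ X.mulVec ν = x ∧ t = relEnt ν q }

/-- `ψ(α|p) = log (∑ i, p i · exp (αᵀ x_i))`, where `x_i` are the columns of `X`. -/
noncomputable def psi {n k : ℕ} (X : Matrix (Fin k) (Fin n) ℝ) (p : Fin n → ℝ)
    (α : Fin k → ℝ) : ℝ :=
  Real.log (∑ i, p i * Real.exp (∑ a, α a * X a i))

lemma tilted_isPPV {n : ℕ} (p μ : Fin n → ℝ) (hp : IsPPV p) (hn : 1 ≤ n) :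
    IsPPV (tilted p μ) := by
  have hpos : 0 < ∑ i, p i * Real.exp (μ i) := by
    haveI : Nonempty (Fin n) := Fin.pos_iff_nonempty.mp hn
    exact Finset.sum_pos (fun i _ => mul_pos (hp.1 i) (Real.exp_pos _)) Finset.univ_nonempty
  constructor
  · intro i; exact mul_pos (hp.1 i) (Real.exp_pos _)
  · simp only [tilted, Real.exp_sub, freeEnergy]
    rw [Real.exp_log hpos]
    simp only [← mul_div_assoc]
    rw [← Finset.sum_div, div_self hpos.ne']

lemma relEnt_nonneg {n : ℕ} (ν q : Fin n → ℝ) (hν : IsPPV ν) (hq : IsPPV q) :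
    0 ≤ relEnt ν q := by
  have h : ∀ i ∈ Finset.univ, ν i - q i ≤ ν i * Real.log (ν i / q i) := by
    intro i _
    have hνi := hν.1 i; have hqi := hq.1 i
    have := Real.log_le_sub_one_of_pos (x := q i / ν i) (by positivity)
    have hlog : Real.log (q i / ν i) = - Real.log (ν i / q i) := by
      rw [← Real.log_inv]; congr 1; field_simp
    rw [hlog] at this
    have h2 : 1 - q i / ν i ≤ Real.log (ν i / q i) := by linarith
    have := mul_le_mul_of_nonneg_left h2 hνi.le
    calc ν i - q i = ν i * (1 - q i / ν i) := by field_simp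
    _ ≤ ν i * Real.log (ν i / q i) := this
  have := Finset.sum_le_sum h
  simpa [relEnt, Finset.sum_sub_distrib, hν.2, hq.2] using this

lemma relEnt_tilted {n : ℕ} (ν p μ : Fin n → ℝ) (hν : IsPPV ν) (hp : IsPPV p) :
    relEnt ν (tilted p μ) = relEnt ν p + freeEnergy p μ - ∑ i, ν i * μ i := by
  have h : ∀ i ∈ Finset.univ, ν i * Real.log (ν i / tilted p μ i)
      = ν i * Real.log (ν i / p i) + ν i * freeEnergy p μ - ν i * μ i := by
    intro i _
    have hνi := hν.1 i; have hpi := hp.1 i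
    have : ν i / tilted p μ i = (ν i / p i) * Real.exp (freeEnergy p μ - μ i) := by
      simp only [tilted, Real.exp_sub]
      field_simp
    rw [this, Real.log_mul (by positivity) (Real.exp_ne_zero _), Real.log_exp]
    ring_nf
  rw [relEnt, Finset.sum_congr rfl h]
  simp only [Finset.sum_sub_distrib, Finset.sum_add_distrib, ← Finset.sum_mul, relEnt, hν.2]
  ring

/-- For attainable empirical means `x`, the entropy production equals the rate
function with tilted reference measure: `φ(x|p) + ψ(α|p) − αᵀx = φ(x | p^{Xᵀα})`. -/
theorem entropy_production_eq_tilted_rate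
    {n k : ℕ} (hn : 1 ≤ n) (hk : 1 ≤ k)
    (p : Fin n → ℝ) (hp : IsPPV p) (X : Matrix (Fin k) (Fin n) ℝ)
    (α : Fin k → ℝ) (x : Fin k → ℝ)
    (hx : ∃ ν : Fin n → ℝ, IsPPV ν ∧ X.mulVec ν = x) :
    phi X p x + psi X p α - (∑ a, α a * x a)
      = phi X (tilted p (fun i => ∑ a, α a * X a i)) x := by
  set μ : Fin n → ℝ := fun i => ∑ a, α a * X a i with hμ
  set c : ℝ := psi X p α - ∑ a, α a * x a with hc
  have hpsi : psi X p α = freeEnergy p μ := rfl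
  have hq : IsPPV (tilted p μ) := tilted_isPPV p μ hp hn
  -- key pointwise identity
  have key : ∀ ν : Fin n → ℝ, IsPPV ν → X.mulVec ν = x →
      relEnt ν (tilted p μ) = relEnt ν p + c := by
    intro ν hν hXν
    have hsum : ∑ i, ν i * μ i = ∑ a, α a * x a := by
      simp only [hμ, Finset.mul_sum, Finset.sum_mul]
      rw [Finset.sum_comm]
      refine Finset.sum_congr rfl fun a _ => ?_
      rw [← hXν]
      simp only [Matrix.mulVec, dotProduct, Finset.mul_sum]
      exact Finset.sum_congr rfl fun i _ => by ring
    rw [relEnt_tilted ν p μ hν hp, hsum, hc, hpsi]; ring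
  set A := { t : ℝ | ∃ ν : Fin n → ℝ, IsPPV ν ∧ X.mulVec ν = x ∧ t = relEnt ν p }
  set B := { t : ℝ | ∃ ν : Fin n → ℝ, IsPPV ν ∧ X.mulVec ν = x ∧ t = relEnt ν (tilted p μ) }
  have hAB : B = (fun t => t + c) '' A := by
    ext t
    constructor
    · rintro ⟨ν, hν, hXν, rfl⟩
      exact ⟨relEnt ν p, ⟨ν, hν, hXν, rfl⟩, (key ν hν hXν).symm⟩
    · rintro ⟨s, ⟨ν, hν, hXν, rfl⟩, rfl⟩
      exact ⟨ν, hν, hXν, (key ν hν hXν).symm⟩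
  have hAne : A.Nonempty := by
    obtain ⟨ν, hν, hXν⟩ := hx
    exact ⟨relEnt ν p, ν, hν, hXν, rfl⟩
  have hAbdd : BddBelow A := by
    refine ⟨0, ?_⟩
    rintro t ⟨ν, hν, hXν, rfl⟩
    exact relEnt_nonneg ν p hν hp
  have h2 : sInf B = sInf A + c := by
    rw [hAB]
    simpa using ((OrderIso.addRight c).rightOrdContinuous.map_csInf hAne hAbdd).symm
  show sInf A + psi X p α - (∑ a, α a * x a) = sInf B
  rw [h2, hc]
  ring
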